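/- Combining the lower and upper bounds: for every n ≥ 1, the minimal number of states of a deterministic finite automaton accepting L_n is exactly 2^n + 1. -/

import Mathlib

/-!
A DFA for `L_n` only has to remember whether two `a`s at distance `n` have occurred (then it
sits in an accepting sink) and, if not, which of the last `n` letters are `a`: this gives
`2^n + 1` states.
Conversely these `2^n + 1` situations are pairwise distinguishable: a word of `L_n` accepts every
suffix, no word of length `n` lies in `L_n`, and two words of length `n` that differ at the
letter followed by `k` others are separated by the suffix `b^(n-1-k) a`. Distinct left quotients
force distinct states in every DFA.
-/

inductive Letter | a | b
deriving DecidableEq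

instance instFintypeLetter : Fintype Letter :=
  ⟨{Letter.a, Letter.b}, fun x => by cases x <;> simp⟩

/-- The language `L_n`: strings with two `a`'s at distance exactly `n`. -/
def L (n : ℕ) : Language Letter :=
  {w | ∃ i, i + n < w.length ∧ w[i]? = some Letter.a ∧ w[i + n]? = some Letter.a}

theorem DFA.card_le_of_injective_leftQuotient {α ι σ : Type*} [Finite σ] (M : DFA α σ)
    (w : ι → List α) (hw : Function.Injective (M.accepts.leftQuotient ∘ w)) :
    Nat.card ι ≤ Nat.card σ := by
  rw [Language.leftQuotient_accepts] at hw
  exact Nat.card_le_card_of_injective _ (Function.Injective.of_comp (f := M.acceptsFrom) hw)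

namespace List

variable {α : Type*} {x : α}

def HasGapPair (n : ℕ) (x : α) (l : List α) : Prop :=
  ∃ i, l[i]? = some x ∧ l[i + n]? = some x

theorem HasGapPair.length_lt {n : ℕ} {l : List α} (h : l.HasGapPair n x) : n < l.length := by
  obtain ⟨i, -, hi⟩ := h
  have := (List.getElem?_eq_some_iff.mp hi).1
  omega

theorem hasGapPair_reverse {n : ℕ} {l : List α} :
    l.reverse.HasGapPair n x ↔ l.HasGapPair n x := by
  suffices ∀ l : List α, l.HasGapPair n x → l.reverse.HasGapPair n x from
    ⟨fun h => l.reverse_reverse ▸ this _ h, this l⟩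
  rintro l ⟨i, hi, hin⟩
  have hlen := (List.getElem?_eq_some_iff.mp hin).1
  refine ⟨l.length - 1 - (i + n), ?_, ?_⟩
  · rwa [List.getElem?_reverse (by omega),
      show l.length - 1 - (l.length - 1 - (i + n)) = i + n by omega]
  · rwa [List.getElem?_reverse (by omega),
      show l.length - 1 - (l.length - 1 - (i + n) + n) = i by omega]

theorem hasGapPair_cons {m : ℕ} {c : α} {l : List α} :
    (c :: l).HasGapPair (m + 1) x ↔ l.HasGapPair (m + 1) x ∨ (c = x ∧ l[m]? = some x) := by
  constructor
  · rintro ⟨_ | i, hi, hin⟩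
    · exact .inr ⟨by simpa using hi, by simpa using hin⟩
    · exact .inl ⟨i, by simpa using hi, by simpa [Nat.add_right_comm i 1] using hin⟩
  · rintro (⟨i, hi, hin⟩ | ⟨rfl, hm⟩)
    · exact ⟨i + 1, by simpa using hi, by simpa [Nat.add_right_comm i 1] using hin⟩
    · exact ⟨0, rfl, by simpa using hm⟩

theorem hasGapPair_replicate_append {m j : ℕ} {y : α} (hy : y ≠ x) {l : List α} :
    (replicate j y ++ l).HasGapPair (m + 1) x ↔ l.HasGapPair (m + 1) x := by
  induction j with
  | zero => rfl
  | succ j ih => simp [replicate_succ, hasGapPair_cons, hy, ih]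

end List

theorem mem_L_iff {n : ℕ} {w : List Letter} : w ∈ L n ↔ w.HasGapPair n .a :=
  ⟨fun ⟨i, _, hi, hin⟩ => ⟨i, hi, hin⟩,
    fun ⟨i, hi, hin⟩ => ⟨i, (List.getElem?_eq_some_iff.mp hin).1, hi, hin⟩⟩

namespace GapPairDFA

variable (m : ℕ)

/-- Applied to the reversed input, so `window m w.reverse k` says that the letter of `w` followed by
exactly `k` letters is `a`. -/
def window (r : List Letter) : Fin (m + 1) → Bool :=
  fun k => decide (r[k]? = some .a)

theorem window_cons (c : Letter) (r : List Letter) :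
    window m (c :: r) = Fin.cons (decide (c = .a)) (Fin.init (window m r)) := by
  funext k
  cases k using Fin.cases <;> simp [window, Fin.init]

def dfa : DFA Letter (Option (Fin (m + 1) → Bool)) where
  step
    | none, _ => none
    | some v, c =>
      if c = .a ∧ v (Fin.last m) then none else some (Fin.cons (decide (c = .a)) (Fin.init v))
  start := some fun _ => false
  accept := {none}

open Classical in
noncomputable def stateOf (r : List Letter) : Option (Fin (m + 1) → Bool) :=
  if r.HasGapPair (m + 1) .a then none else some (window m r)

theorem step_stateOf (r : List Letter) (c : Letter) :
    (dfa m).step (stateOf m r) c = stateOf m (c :: r) := by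
  by_cases hr : r.HasGapPair (m + 1) .a
  · simp [stateOf, hr, List.hasGapPair_cons, dfa]
  · simp [stateOf, hr, List.hasGapPair_cons, dfa, window_cons, window]

theorem eval_eq_stateOf (w : List Letter) : (dfa m).eval w = stateOf m w.reverse := by
  induction w using List.reverseRecOn with
  | nil =>
    have hnil : ¬ ([] : List Letter).HasGapPair (m + 1) .a := fun h => by simpa using h.length_lt
    have hwindow : window m [] = fun _ => false := by funext; simp [window]
    simp [stateOf, hnil, hwindow, dfa]
  | append_singleton w c ih => simp [ih, step_stateOf]

theorem accepts_dfa : (dfa m).accepts = L (m + 1) := by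
  ext w
  rw [DFA.mem_accepts, eval_eq_stateOf, mem_L_iff, ← List.hasGapPair_reverse]
  by_cases h : w.reverse.HasGapPair (m + 1) .a <;> simp [stateOf, h, dfa]

def representative : Option (Fin (m + 1) → Bool) → List Letter
  | none => List.replicate (m + 2) .a
  | some v => (List.ofFn fun k => if v k then .a else .b).reverse

theorem representative_mem_L_iff (s : Option (Fin (m + 1) → Bool)) :
    representative m s ∈ L (m + 1) ↔ s = none := by
  rcases s with _ | v
  · exact iff_of_true
      (mem_L_iff.mpr ⟨0, by simp [representative], by simp [representative]⟩) rfl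
  · exact iff_of_false (fun h => by simpa [representative] using (mem_L_iff.mp h).length_lt) nofun

theorem representative_append_mem_iff (v : Fin (m + 1) → Bool) (k : Fin (m + 1)) :
    representative m (some v) ++ (List.replicate (m - k) .b ++ [.a]) ∈ L (m + 1) ↔ v k := by
  have hofFn : ¬ (List.ofFn fun k => if v k then Letter.a else .b).HasGapPair (m + 1) .a :=
    fun h => by simpa using h.length_lt
  rw [mem_L_iff, ← List.hasGapPair_reverse]
  simp only [representative, List.reverse_append, List.reverse_cons, List.reverse_nil,
    List.reverse_replicate, List.reverse_reverse, List.nil_append, List.cons_append,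
    List.hasGapPair_cons, List.hasGapPair_replicate_append (show Letter.b ≠ .a by decide), hofFn,
    false_or, true_and]
  rw [List.getElem?_append_right (by simp), List.length_replicate,
    show m - (m - k) = k by omega, List.getElem?_ofFn]
  simp [Nat.le_of_lt_succ k.isLt]

theorem injective_leftQuotient_representative :
    Function.Injective ((L (m + 1)).leftQuotient ∘ representative m) := by
  intro s s' h
  have hnone : s = none ↔ s' = none := by
    have := congrArg ([] ∈ ·) h
    simpa only [Function.comp_apply, Language.mem_leftQuotient, List.append_nil,
      representative_mem_L_iff, eq_iff_iff] using this
  rcases s with _ | v <;> rcases s' with _ | v'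
  · rfl
  · simp at hnone
  · simp at hnone
  · congr 1
    funext k
    have := congrArg ((List.replicate (m - k) .b ++ [.a]) ∈ ·) h
    simpa only [Function.comp_apply, Language.mem_leftQuotient, representative_append_mem_iff,
      eq_iff_iff, Bool.coe_iff_coe] using this

end GapPairDFA

open GapPairDFA in
/-- The minimal number of states of a DFA accepting `L_n` is exactly `2^n + 1`. -/
theorem stmt9 (n : ℕ) (hn : 1 ≤ n) :
    IsLeast {k : ℕ | ∃ (σ : Type) (_ : Fintype σ) (M : DFA Letter σ),
      M.accepts = L n ∧ Fintype.card σ = k} (2 ^ n + 1) := by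
  obtain ⟨m, rfl⟩ : ∃ m, n = m + 1 := ⟨n - 1, by omega⟩
  refine ⟨⟨_, inferInstance, dfa m, accepts_dfa m, by simp⟩, ?_⟩
  rintro k ⟨σ, _, M, hM, rfl⟩
  have hcard := M.card_le_of_injective_leftQuotient (representative m)
    (hM ▸ injective_leftQuotient_representative m)
  simpa [Nat.card_eq_fintype_card] using hcard
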